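/- arXiv:1109.4918 — 3 statements merged into one kernel-verified Lean document; each statement's English description precedes it below -/
import Mathlib

section
/- Let G=(V,E) be a finite connected graph (loops allowed) and f : V → ℝ a function. Then the equation u(x) − (1/2)(min_{y∼x} u(y) + max_{y∼x} u(y)) = f(x) for all x ∈ V has a solution u : V → ℝ if and only if c_f = 0. -/
open Set Filter Topology
open scoped ENNReal Classical

/-- Tug-of-war game values on the graph with adjacency relation `adj`, running payoff `f`
and terminal payoff `u₀`:
`u_{n+1}(x) = (1/2)(sup_{y∼x} u_n(y) + inf_{y∼x} u_n(y)) + f(x)`. -/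
noncomputable def gameVal {V : Type*} (adj : V → V → Prop) (f u₀ : V → ℝ) : ℕ → V → ℝ
  | 0 => u₀
  | n + 1 => fun x =>
      (sSup (gameVal adj f u₀ n '' {y | adj x y}) +
        sInf (gameVal adj f u₀ n '' {y | adj x y})) / 2 + f x

/-- `c` is Player I's long term advantage for running payoff `f`: the game values with
terminal payoff `0` satisfy that `(u_n - n·c)` is uniformly bounded. -/
def IsLTA {V : Type*} (adj : V → V → Prop) (f : V → ℝ) (c : ℝ) : Prop :=
  ∃ C : ℝ, ∀ (n : ℕ) (x : V), |gameVal adj f (fun _ => (0:ℝ)) n x - n * c| ≤ C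

/-- `ReachesIn adj n x y`: there is a walk of length exactly `n` from `x` to `y`. -/
def ReachesIn {V : Type*} (adj : V → V → Prop) : ℕ → V → V → Prop
  | 0 => fun x y => x = y
  | n + 1 => fun x y => ∃ z, adj x z ∧ ReachesIn adj n z y

/-! Write `T u x = (max_{y∼x} u y + min_{y∼x} u y) / 2 + f x`, so that game values are the
iterates of `T` from `0` and solutions are the fixed points of `T`. The operator `T` is monotone
and `1`-Lipschitz for the sup norm. Hence a fixed point, whose orbit is constant, forces every
orbit to be bounded. Conversely, if the orbit of `0` is bounded, its pointwise `limsup` `w`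
satisfies `w ≤ T w` by monotonicity and continuity of `T`; the iterates of `w` then increase,
stay bounded, and converge to a fixed point. -/

open Function Bornology

section OrderFixedPoint

variable {α : Type*} [ConditionallyCompleteLattice α] [TopologicalSpace α] {T : α → α}

theorem exists_isFixedPt_of_le_map [SupConvergenceClass α] [T2Space α] (hmono : Monotone T)
    (hcont : Continuous T) {x : α} (hx : x ≤ T x) (hbdd : BddAbove (range fun n => T^[n] x)) :
    ∃ y, IsFixedPt T y :=
  ⟨_, isFixedPt_of_tendsto_iterate
    (tendsto_atTop_ciSup (hmono.monotone_iterate_of_le_map hx) hbdd) hcont.continuousAt⟩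

theorem iInf_iSup_iterate_le_map [InfConvergenceClass α] [OrderClosedTopology α]
    (hmono : Monotone T) (hcont : Continuous T) {x : α}
    (hbdd : BddBelow (range fun n => T^[n] x) ∧ BddAbove (range fun n => T^[n] x)) :
    (⨅ k, ⨆ n, T^[n + k] x) ≤ T (⨅ k, ⨆ n, T^[n + k] x) := by
  set s : ℕ → α := fun k => ⨆ n, T^[n + k] x
  have hbdd_tail : ∀ k, BddAbove (range fun n => T^[n + k] x) := fun k =>
    hbdd.2.mono (range_subset_iff.2 fun n => mem_range_self _)
  have hs_anti : Antitone s := antitone_nat_of_succ_le fun k =>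
    ciSup_le fun n => le_ciSup_of_le (hbdd_tail k) (n + 1) (by rw [Nat.add_right_comm]; rfl)
  have hs_bdd : BddBelow (range s) := by
    obtain ⟨L, hL⟩ := hbdd.1
    exact ⟨L, forall_mem_range.2 fun k =>
      (hL (mem_range_self k)).trans (le_ciSup_of_le (hbdd_tail k) 0 (by rw [zero_add]))⟩
  have hs_succ : ∀ k, s (k + 1) ≤ T (s k) := fun k => ciSup_le fun n => by
    rw [← Nat.add_assoc, iterate_succ_apply']
    exact hmono (le_ciSup (hbdd_tail k) n)
  have hlim := tendsto_atTop_ciInf hs_anti hs_bdd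
  exact le_of_tendsto_of_tendsto' ((tendsto_add_atTop_iff_nat 1).2 hlim)
    ((hcont.tendsto _).comp hlim) hs_succ

end OrderFixedPoint

theorem LipschitzWith.isBounded_range_iterate {X : Type*} [PseudoMetricSpace X] {T : X → X}
    (hT : LipschitzWith 1 T) {x : X} (hx : IsBounded (range fun n => T^[n] x)) (y : X) :
    IsBounded (range fun n => T^[n] y) := by
  obtain ⟨r, hr⟩ := hx.subset_closedBall x
  refine (Metric.isBounded_closedBall (x := x) (r := dist y x + r)).subset
    (range_subset_iff.2 fun n => ?_)
  have hn : dist (T^[n] y) (T^[n] x) ≤ dist y x := by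
    simpa using (hT.iterate n).dist_le_mul y x
  exact (dist_triangle _ _ _).trans (add_le_add hn (hr (mem_range_self n)))

section Topical

variable {ι : Type*} [Fintype ι] {T : (ι → ℝ) → (ι → ℝ)}

theorem exists_isFixedPt_iff_isBounded_range_iterate (hmono : Monotone T)
    (hlip : LipschitzWith 1 T) (x : ι → ℝ) :
    (∃ y, IsFixedPt T y) ↔ IsBounded (range fun n => T^[n] x) := by
  constructor
  · rintro ⟨y, hy⟩
    refine hlip.isBounded_range_iterate (x := y) ?_ x
    simp only [iterate_fixed hy, range_const, isBounded_singleton]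
  · intro hx
    have hsub := iInf_iSup_iterate_le_map hmono hlip.continuous
      (isBounded_iff_bddBelow_bddAbove.1 hx)
    exact exists_isFixedPt_of_le_map hmono hlip.continuous hsub
      (hlip.isBounded_range_iterate hx _).bddAbove

end Topical

theorem Real.sSup_image_le_sSup_image_add {β : Type*} {s : Set β} (hs : s.Finite) {u v : β → ℝ}
    {c : ℝ} (hc : 0 ≤ c) (h : ∀ y ∈ s, u y ≤ v y + c) : sSup (u '' s) ≤ sSup (v '' s) + c := by
  rcases s.eq_empty_or_nonempty with rfl | hne
  · simpa using hc
  refine csSup_le (hne.image u) (forall_mem_image.2 fun y hy => (h y hy).trans ?_)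
  exact (add_le_add_iff_right c).2 (le_csSup (hs.image v).bddAbove (mem_image_of_mem v hy))

theorem Real.sInf_image_le_sInf_image_add {β : Type*} {s : Set β} (hs : s.Finite) {u v : β → ℝ}
    {c : ℝ} (hc : 0 ≤ c) (h : ∀ y ∈ s, u y ≤ v y + c) : sInf (u '' s) ≤ sInf (v '' s) + c := by
  rcases s.eq_empty_or_nonempty with rfl | hne
  · simpa using hc
  rw [← sub_le_iff_le_add]
  refine le_csInf (hne.image v) (forall_mem_image.2 fun y hy => ?_)
  rw [sub_le_iff_le_add]
  exact (csInf_le (hs.image u).bddBelow (mem_image_of_mem u hy)).trans (h y hy)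

section TugOfWar

variable {V : Type*} (adj : V → V → Prop) (f : V → ℝ)

noncomputable def tugOfWar (u : V → ℝ) (x : V) : ℝ :=
  (sSup (u '' {y | adj x y}) + sInf (u '' {y | adj x y})) / 2 + f x

theorem gameVal_eq_iterate (u₀ : V → ℝ) (n : ℕ) :
    gameVal adj f u₀ n = (tugOfWar adj f)^[n] u₀ := by
  induction n with
  | zero => rfl
  | succ n ih => rw [iterate_succ_apply', ← ih]; rfl

variable {adj f}

theorem tugOfWar_le_add [Finite V] {u v : V → ℝ} {c : ℝ} (hc : 0 ≤ c) (h : ∀ y, u y ≤ v y + c)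
    (x : V) :
    tugOfWar adj f u x ≤ tugOfWar adj f v x + c := by
  have hsup := Real.sSup_image_le_sSup_image_add (toFinite {y | adj x y}) hc fun y _ => h y
  have hinf := Real.sInf_image_le_sInf_image_add (toFinite {y | adj x y}) hc fun y _ => h y
  unfold tugOfWar
  linarith

variable (adj f)

theorem monotone_tugOfWar [Finite V] : Monotone (tugOfWar adj f) := fun _ _ h x =>
  (tugOfWar_le_add le_rfl (fun y => (h y).trans_eq (add_zero _).symm) x).trans_eq (add_zero _)

theorem lipschitzWith_one_tugOfWar [Fintype V] : LipschitzWith 1 (tugOfWar adj f) := by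
  refine LipschitzWith.of_dist_le_mul fun u v => ?_
  rw [NNReal.coe_one, one_mul, dist_pi_le_iff dist_nonneg]
  intro x
  have hle : ∀ y, u y ≤ v y + dist u v ∧ v y ≤ u y + dist u v := fun y => by
    have := abs_sub_le_iff.1 ((Real.dist_eq _ _).symm.trans_le (dist_le_pi_dist u v y))
    constructor <;> linarith
  have hu := tugOfWar_le_add (adj := adj) (f := f) dist_nonneg (fun y => (hle y).1) x
  have hv := tugOfWar_le_add (adj := adj) (f := f) dist_nonneg (fun y => (hle y).2) x
  rw [Real.dist_eq, abs_sub_le_iff]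
  constructor <;> linarith

end TugOfWar

theorem isLTA_zero_iff_isBounded_range_gameVal {V : Type*} [Fintype V] (adj : V → V → Prop)
    (f : V → ℝ) :
    IsLTA adj f 0 ↔ IsBounded (range fun n => gameVal adj f (fun _ => 0) n) := by
  simp only [IsLTA, mul_zero, sub_zero, isBounded_iff_forall_norm_le, forall_mem_range,
    ← Real.norm_eq_abs]
  constructor
  · rintro ⟨C, hC⟩
    exact ⟨max C 0, fun n => (pi_norm_le_iff_of_nonneg (le_max_right _ _)).2 fun x =>
      (hC n x).trans (le_max_left _ _)⟩
  · rintro ⟨C, hC⟩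
    exact ⟨C, fun n x => (norm_le_pi_norm _ x).trans (hC n)⟩

theorem discrete_infinity_laplace_solvable_iff_general {V : Type*} [Fintype V]
    (adj : V → V → Prop) (f : V → ℝ) :
    (∃ u : V → ℝ, ∀ x : V,
        u x - (sInf (u '' {y | adj x y}) + sSup (u '' {y | adj x y})) / 2 = f x) ↔
      IsLTA adj f 0 := by
  have hsolution_iff : ∀ u : V → ℝ,
      (∀ x, u x - (sInf (u '' {y | adj x y}) + sSup (u '' {y | adj x y})) / 2 = f x) ↔
        IsFixedPt (tugOfWar adj f) u := fun u => by
    simp only [IsFixedPt, funext_iff, tugOfWar]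
    exact forall_congr' fun x => by constructor <;> intro h <;> linarith
  simp only [hsolution_iff, isLTA_zero_iff_isBounded_range_gameVal, gameVal_eq_iterate]
  exact exists_isFixedPt_iff_isBounded_range_iterate (monotone_tugOfWar adj f)
    (lipschitzWith_one_tugOfWar adj f) _

/-- On a finite connected graph (loops allowed), the equation
`u(x) − (1/2)(min_{y∼x} u(y) + max_{y∼x} u(y)) = f(x)` has a solution iff `c_f = 0`. -/
theorem discrete_infinity_laplace_solvable_iff {V : Type*} [Fintype V]
    (adj : V → V → Prop) (hsymm : Symmetric adj)
    (hconn : ∀ x y : V, ∃ n : ℕ, ReachesIn adj n x y) (f : V → ℝ) :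
    (∃ u : V → ℝ, ∀ x : V,
        u x - (sInf (u '' {y | adj x y}) + sSup (u '' {y | adj x y})) / 2 = f x) ↔
      IsLTA adj f 0 :=
  discrete_infinity_laplace_solvable_iff_general adj f
end

section
/- Let G=(V,E) be a connected graph of finite diameter diam(G) and let f, u₀ : V → ℝ be bounded. If (u_n) is the sequence of game values with terminal payoff u₀ and running payoff f, then for all n ≥ 0, sup_V u_n − inf_V u_n ≤ (sup_V u₀ − inf_V u₀) + diam(G)² · (sup_V f − inf_V f). -/
/-!
Let `v_n` be the game values with terminal payoff `0`. The one-step operator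
`g ↦ (sup_{N(x)} g + inf_{N(x)} g) / 2` is monotone and commutes with constants, so
`v_n + inf u₀ ≤ u_n ≤ v_n + sup u₀` and it suffices to bound `v_n(x) - v_n(y)` by
`diam(G)² · osc f`.

For `D = diam(G) ≥ 2` one proves `v_n(x) - v_n(y) ≤ (D² - (D - d(x, y))²) · osc f` by induction
on `n`. When `d(x, y) ≥ 2`, the sup over the neighbours of `x` is compared with the inf over the
neighbours of `y` (distance at most `d + 2`) and the inf over the neighbours of `x` with the sup
over the neighbours of `y`, along a geodesic (distance at most `d - 2`); concavity of the
potential pays for the running payoff. When `d(x, y) = 1`, one uses in addition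
`v_{n+1} ≥ v_n + inf f`. For `D = 1` any two distinct vertices are adjacent, and the invariant
`v_n(x) - v_n(y) ≤ osc f + min(0, f(x) - f(y))` propagates directly.
-/

open Set Filter Topology
open scoped ENNReal Classical

/-- The graph distance: the least length of a walk from `x` to `y`. -/
noncomputable def graphDist {V : Type*} (adj : V → V → Prop) (x y : V) : ℕ :=
  sInf {n | ReachesIn adj n x y}

/-- The diameter of the graph in the graph metric. -/
noncomputable def graphDiam {V : Type*} (adj : V → V → Prop) : ℕ :=
  sSup {m | ∃ x y : V, graphDist adj x y = m}

open Bornology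

section

variable {V : Type*} {adj : V → V → Prop}

section Walks

variable {m n k : ℕ} {x y z : V}

lemma reachesIn_one : ReachesIn adj 1 x y ↔ adj x y := by
  simp [ReachesIn]

lemma ReachesIn.trans (h₁ : ReachesIn adj m x y) (h₂ : ReachesIn adj k y z) :
    ReachesIn adj (m + k) x z := by
  induction m generalizing x with
  | zero =>
    obtain rfl : x = y := h₁
    simpa using h₂
  | succ m ih =>
    obtain ⟨w, hxw, hwy⟩ := h₁
    rw [Nat.succ_add]
    exact ⟨w, hxw, ih hwy⟩

lemma ReachesIn.symm (hs : Symmetric adj) (h : ReachesIn adj n x y) : ReachesIn adj n y x := by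
  induction n generalizing x with
  | zero => exact (show x = y from h).symm
  | succ n ih =>
    obtain ⟨w, hxw, hwy⟩ := h
    exact (ih hwy).trans (reachesIn_one.2 (hs hxw))

lemma exists_adj_of_ne (hconn : ∀ x y : V, ∃ n, ReachesIn adj n x y) (hxy : x ≠ y) :
    ∃ z, adj x z := by
  obtain ⟨_ | n, h⟩ := hconn x y
  · exact absurd h hxy
  · obtain ⟨z, hxz, -⟩ := h
    exact ⟨z, hxz⟩

lemma graphDist_le (h : ReachesIn adj n x y) : graphDist adj x y ≤ n :=
  Nat.sInf_le h

lemma reachesIn_graphDist (hconn : ∀ x y : V, ∃ n, ReachesIn adj n x y) (x y : V) :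
    ReachesIn adj (graphDist adj x y) x y :=
  Nat.sInf_mem (hconn x y)

lemma eq_of_graphDist_eq_zero (hconn : ∀ x y : V, ∃ n, ReachesIn adj n x y)
    (h : graphDist adj x y = 0) : x = y := by
  simpa [h, ReachesIn] using reachesIn_graphDist hconn x y

lemma adj_of_graphDist_eq_one (hconn : ∀ x y : V, ∃ n, ReachesIn adj n x y)
    (h : graphDist adj x y = 1) : adj x y := by
  simpa [h] using reachesIn_one.1 (h ▸ reachesIn_graphDist hconn x y)

lemma graphDist_le_add_two (hs : Symmetric adj) (hconn : ∀ x y : V, ∃ n, ReachesIn adj n x y)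
    {a b : V} (ha : adj x a) (hb : adj y b) : graphDist adj a b ≤ graphDist adj x y + 2 := by
  have h := graphDist_le <|
    (reachesIn_one.2 (hs ha)).trans ((reachesIn_graphDist hconn x y).trans (reachesIn_one.2 hb))
  omega

lemma exists_adj_adj_graphDist_le (hs : Symmetric adj)
    (hconn : ∀ x y : V, ∃ n, ReachesIn adj n x y) (h : graphDist adj x y = k + 2) :
    ∃ z w, adj x z ∧ adj y w ∧ graphDist adj z w ≤ k := by
  obtain ⟨z, hxz, hzy⟩ : ReachesIn adj (k + 2) x y := h ▸ reachesIn_graphDist hconn x y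
  obtain ⟨w, hyw, hwz⟩ := hzy.symm hs
  exact ⟨z, w, hxz, hyw, graphDist_le (hwz.symm hs)⟩

lemma graphDist_le_graphDiam {D : ℕ} (hD : ∀ x y : V, ∃ n ≤ D, ReachesIn adj n x y) (x y : V) :
    graphDist adj x y ≤ graphDiam adj := by
  refine le_csSup ⟨D, ?_⟩ ⟨x, y, rfl⟩
  rintro _ ⟨a, b, rfl⟩
  obtain ⟨n, hn, h⟩ := hD a b
  exact (graphDist_le h).trans hn

end Walks

section ImageBounds

variable {ι β : Type*} [ConditionallyCompleteLattice β] {g : ι → β} {s : Set ι} {c : β} {z : ι}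

lemma sSup_image_le (hs : s.Nonempty) (h : ∀ z ∈ s, g z ≤ c) : sSup (g '' s) ≤ c :=
  csSup_le (hs.image g) (forall_mem_image.2 h)

lemma le_sInf_image (hs : s.Nonempty) (h : ∀ z ∈ s, c ≤ g z) : c ≤ sInf (g '' s) :=
  le_csInf (hs.image g) (forall_mem_image.2 h)

lemma le_sSup_image_of_mem (hg : BddAbove (range g)) (hz : z ∈ s) : g z ≤ sSup (g '' s) :=
  le_csSup (hg.mono (image_subset_range g s)) (mem_image_of_mem g hz)

lemma sInf_image_le_of_mem (hg : BddBelow (range g)) (hz : z ∈ s) : sInf (g '' s) ≤ g z :=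
  csInf_le (hg.mono (image_subset_range g s)) (mem_image_of_mem g hz)

end ImageBounds

section Oscillation

variable {ι : Type*} {g : ι → ℝ} {c : ℝ}

lemma isBounded_range_zero : IsBounded (range (0 : ι → ℝ)) :=
  isBounded_singleton.subset range_const_subset

lemma sub_le_ciSup_sub_ciInf (hg : IsBounded (range g)) (x y : ι) :
    g x - g y ≤ (⨆ x, g x) - ⨅ x, g x :=
  sub_le_sub (le_ciSup hg.bddAbove x) (ciInf_le hg.bddBelow y)

lemma ciSup_sub_ciInf_le [Nonempty ι] (h : ∀ x y, g x - g y ≤ c) :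
    (⨆ x, g x) - ⨅ x, g x ≤ c := by
  suffices ⨆ x, g x ≤ (⨅ x, g x) + c by linarith
  exact ciSup_le fun x => by
    have : g x - c ≤ ⨅ y, g y := le_ciInf fun y => by linarith [h x y]
    linarith

end Oscillation

section GameValues

variable {f u u₀ : V → ℝ} {n : ℕ}

lemma gameVal_succ (x : V) : gameVal adj f u₀ (n + 1) x =
    (sSup (gameVal adj f u₀ n '' {y | adj x y}) +
      sInf (gameVal adj f u₀ n '' {y | adj x y})) / 2 + f x := rfl

lemma gameVal_succ' (n : ℕ) :
    gameVal adj f u₀ (n + 1) = gameVal adj f (gameVal adj f u₀ 1) n := by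
  induction n with
  | zero => rfl
  | succ n ih =>
    funext x
    rw [gameVal_succ, gameVal_succ, ih]

lemma gameVal_one_zero : gameVal adj f 0 1 = f := by
  funext x
  rcases eq_empty_or_nonempty {y | adj x y} with h | h
  · simp [gameVal_succ, h]
  · simp [gameVal, h.image_const]

lemma isBounded_range_gameVal (hN : ∀ x : V, {y | adj x y}.Nonempty)
    (hf : IsBounded (range f)) (hu₀ : IsBounded (range u₀)) (n : ℕ) :
    IsBounded (range (gameVal adj f u₀ n)) := by
  induction n with
  | zero => exact hu₀
  | succ n ih =>
    obtain ⟨⟨a, ha⟩, ⟨b, hb⟩⟩ := isBounded_iff_bddBelow_bddAbove.1 ih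
    obtain ⟨⟨a', ha'⟩, ⟨b', hb'⟩⟩ := isBounded_iff_bddBelow_bddAbove.1 hf
    refine (Metric.isBounded_Icc (a + a') (b + b')).subset (range_subset_iff.2 fun x => ?_)
    obtain ⟨z, hz⟩ := hN x
    have hS₁ := sSup_image_le (hN x) fun w _ => hb ⟨w, rfl⟩
    have hS₂ := (ha ⟨z, rfl⟩).trans (le_sSup_image_of_mem ih.bddAbove hz)
    have hI₁ := le_sInf_image (hN x) fun w _ => ha ⟨w, rfl⟩
    have hI₂ := (sInf_image_le_of_mem ih.bddBelow hz).trans (hb ⟨z, rfl⟩)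
    have hfx : a' ≤ f x ∧ f x ≤ b' := ⟨ha' ⟨x, rfl⟩, hb' ⟨x, rfl⟩⟩
    rw [gameVal_succ]
    constructor <;> linarith

lemma gameVal_le_gameVal_add {u' : V → ℝ} {c : ℝ} (hN : ∀ x : V, {y | adj x y}.Nonempty)
    (hf : IsBounded (range f)) (hu : IsBounded (range u))
    (hu' : IsBounded (range u')) (h : ∀ x, u x ≤ u' x + c) :
    ∀ n x, gameVal adj f u n x ≤ gameVal adj f u' n x + c
  | 0 => h
  | n + 1 => fun x => by
    have ih := gameVal_le_gameVal_add hN hf hu hu' h n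
    have hS : sSup (gameVal adj f u n '' {y | adj x y}) ≤
        sSup (gameVal adj f u' n '' {y | adj x y}) + c :=
      sSup_image_le (hN x) fun z hz => (ih z).trans <| by
        gcongr
        exact le_sSup_image_of_mem (isBounded_range_gameVal hN hf hu' n).bddAbove hz
    have hI : sInf (gameVal adj f u n '' {y | adj x y}) ≤
        sInf (gameVal adj f u' n '' {y | adj x y}) + c := by
      suffices sInf (gameVal adj f u n '' {y | adj x y}) - c ≤
          sInf (gameVal adj f u' n '' {y | adj x y}) by linarith
      refine le_sInf_image (hN x) fun z hz => ?_
      have := sInf_image_le_of_mem (isBounded_range_gameVal hN hf hu n).bddBelow hz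
      linarith [ih z]
    rw [gameVal_succ, gameVal_succ]
    linarith

lemma gameVal_zero_add_le_succ {m : ℝ} (hN : ∀ x : V, {y | adj x y}.Nonempty)
    (hf : IsBounded (range f)) (hm : ∀ z, m ≤ f z) (n : ℕ) (x : V) :
    gameVal adj f 0 n x + m ≤ gameVal adj f 0 (n + 1) x := by
  rw [gameVal_succ', gameVal_one_zero]
  have := gameVal_le_gameVal_add (u := 0) (c := -m) hN hf isBounded_range_zero hf
    (fun z => by simp [hm z]) n x
  linarith

end GameValues

/-- `D² - (D - j)² = j (2D - j)` is the expected time for a simple random walk on `{0, …, 2D}`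
started at `j` to reach an endpoint. -/
noncomputable def distPotential (D j : ℕ) : ℝ := (D : ℝ) ^ 2 - ((D : ℝ) - j) ^ 2

section Potential

variable {D i j k : ℕ}

@[simp] lemma distPotential_zero : distPotential D 0 = 0 := by
  simp [distPotential]

lemma distPotential_le_sq : distPotential D j ≤ (D : ℝ) ^ 2 :=
  sub_le_self _ (sq_nonneg _)

lemma distPotential_mono (hij : i ≤ j) (hj : j ≤ D) : distPotential D i ≤ distPotential D j := by
  have hij' : (i : ℝ) ≤ j := by exact_mod_cast hij
  have hj' : (j : ℝ) ≤ D := by exact_mod_cast hj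
  unfold distPotential
  nlinarith

lemma distPotential_nonneg (hj : j ≤ D) : 0 ≤ distPotential D j := by
  simpa using distPotential_mono (Nat.zero_le j) hj

lemma distPotential_one : distPotential D 1 = distPotential D 2 / 2 + 1 := by
  unfold distPotential
  push_cast
  ring

lemma distPotential_add_two (hk : k + 2 ≤ D) :
    distPotential D (min (k + 4) D) + distPotential D k + 2 ≤ 2 * distPotential D (k + 2) := by
  rcases le_total (k + 4) D with h | h
  · rw [min_eq_left h]
    unfold distPotential
    push_cast
    nlinarith
  · rw [min_eq_right h]
    have hk' : (k : ℝ) + 2 ≤ D := by exact_mod_cast hk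
    have h' : (D : ℝ) ≤ k + 4 := by exact_mod_cast h
    unfold distPotential
    push_cast
    nlinarith

end Potential

section PotentialStep

variable {D k : ℕ} {δ : ℝ} {g : V → ℝ} {x y : V}

lemma sSup_add_sInf_image_le_of_adj (hs : Symmetric adj) (hD : 2 ≤ D) (hδ : 0 ≤ δ)
    (hg : IsBounded (range g))
    (hgφ : ∀ a b, g a - g b ≤ distPotential D (graphDist adj a b) * δ) (hxy : adj x y) :
    sSup (g '' {z | adj x z}) + sInf (g '' {z | adj x z}) ≤
      2 * g y + distPotential D 2 * δ := by
  have hS : sSup (g '' {z | adj x z}) ≤ g y + distPotential D 2 * δ :=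
    sSup_image_le ⟨y, hxy⟩ fun z hz => by
      have hzy : graphDist adj z y ≤ 2 := graphDist_le ⟨x, hs hz, y, hxy, rfl⟩
      have := mul_le_mul_of_nonneg_right (distPotential_mono hzy hD) hδ
      linarith [hgφ z y]
  have hI : sInf (g '' {z | adj x z}) ≤ g y := sInf_image_le_of_mem hg.bddBelow hxy
  linarith

lemma sSup_add_sInf_image_sub_le_of_graphDist_eq (hs : Symmetric adj)
    (hconn : ∀ x y : V, ∃ n, ReachesIn adj n x y) (hdist : ∀ x y, graphDist adj x y ≤ D)
    (hδ : 0 ≤ δ) (hg : IsBounded (range g))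
    (hgφ : ∀ a b, g a - g b ≤ distPotential D (graphDist adj a b) * δ)
    (h : graphDist adj x y = k + 2) :
    sSup (g '' {z | adj x z}) + sInf (g '' {z | adj x z}) -
        (sSup (g '' {z | adj y z}) + sInf (g '' {z | adj y z})) ≤
      (distPotential D (min (k + 4) D) + distPotential D k) * δ := by
  obtain ⟨z, w, hxz, hyw, hzw⟩ := exists_adj_adj_graphDist_le hs hconn h
  have hkD : k + 2 ≤ D := h ▸ hdist x y
  have hSI : sSup (g '' {a | adj x a}) ≤
      sInf (g '' {b | adj y b}) + distPotential D (min (k + 4) D) * δ := by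
    refine sSup_image_le ⟨z, hxz⟩ fun a ha => ?_
    suffices g a - distPotential D (min (k + 4) D) * δ ≤ sInf (g '' {b | adj y b}) by linarith
    refine le_sInf_image ⟨w, hyw⟩ fun b hb => ?_
    have hab : graphDist adj a b ≤ min (k + 4) D :=
      le_min (by linarith [graphDist_le_add_two hs hconn ha hb]) (hdist a b)
    have := mul_le_mul_of_nonneg_right (distPotential_mono hab (min_le_right _ _)) hδ
    linarith [hgφ a b]
  have hIS : sInf (g '' {a | adj x a}) ≤ sSup (g '' {b | adj y b}) + distPotential D k * δ := by
    have := sInf_image_le_of_mem (s := {a | adj x a}) hg.bddBelow hxz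
    have := le_sSup_image_of_mem (s := {b | adj y b}) hg.bddAbove hyw
    have := mul_le_mul_of_nonneg_right (distPotential_mono (D := D) hzw (by omega)) hδ
    linarith [hgφ z w]
  linarith

end PotentialStep

lemma gameVal_zero_sub_le_distPotential_mul {D : ℕ} {δ : ℝ} {f : V → ℝ} (hs : Symmetric adj)
    (hconn : ∀ x y : V, ∃ n, ReachesIn adj n x y) (hdist : ∀ x y, graphDist adj x y ≤ D)
    (hD : 2 ≤ D) (hN : ∀ x : V, {y | adj x y}.Nonempty) (hf : IsBounded (range f))
    (hδ : ∀ x y, f x - f y ≤ δ) (n : ℕ) (x y : V) :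
    gameVal adj f 0 n x - gameVal adj f 0 n y ≤ distPotential D (graphDist adj x y) * δ := by
  have hδ₀ : 0 ≤ δ := by simpa using hδ x x
  induction n generalizing x y with
  | zero => simpa [gameVal] using mul_nonneg (distPotential_nonneg (hdist x y)) hδ₀
  | succ n ih =>
    have hv := isBounded_range_gameVal hN hf isBounded_range_zero n
    obtain h | h | ⟨k, h⟩ : graphDist adj x y = 0 ∨ graphDist adj x y = 1 ∨
        ∃ k, graphDist adj x y = k + 2 := by
      rcases graphDist adj x y with _ | _ | k <;> simp
    · obtain rfl := eq_of_graphDist_eq_zero hconn h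
      simp [h]
    · have hxy := adj_of_graphDist_eq_one hconn h
      have hx := sSup_add_sInf_image_le_of_adj hs hD hδ₀ hv ih hxy
      have hy := gameVal_zero_add_le_succ (m := f x - δ) hN hf (fun z => by linarith [hδ x z]) n y
      rw [gameVal_succ, h, distPotential_one]
      linarith
    · have hxy := sSup_add_sInf_image_sub_le_of_graphDist_eq hs hconn hdist hδ₀ hv ih h
      have hstep := mul_le_mul_of_nonneg_right (distPotential_add_two (h ▸ hdist x y)) hδ₀
      rw [gameVal_succ, gameVal_succ, h]
      linarith [hδ x y]

section CompleteGraph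

variable {g : V → ℝ} {x y : V}

lemma sSup_image_sub_le_of_complete (hcomplete : ∀ a b : V, a ≠ b → adj a b)
    (hg : IsBounded (range g)) (hxy : x ≠ y) :
    sSup (g '' {z | adj x z}) - sSup (g '' {z | adj y z}) ≤ max (g y - g x) 0 := by
  have hSy : g x ≤ sSup (g '' {z | adj y z}) :=
    le_sSup_image_of_mem hg.bddAbove (hcomplete y x hxy.symm)
  have hSx : sSup (g '' {z | adj x z}) ≤ max (g y) (sSup (g '' {z | adj y z})) := by
    refine sSup_image_le ⟨y, hcomplete x y hxy⟩ fun a _ => ?_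
    rcases eq_or_ne a y with rfl | hay
    · exact le_max_left _ _
    · exact le_max_of_le_right (le_sSup_image_of_mem hg.bddAbove (hcomplete y a hay.symm))
  rcases le_max_iff.1 hSx with h | h
  · exact le_max_of_le_left (by linarith)
  · exact le_max_of_le_right (by linarith)

lemma sInf_image_sub_le_of_complete (hcomplete : ∀ a b : V, a ≠ b → adj a b)
    (hg : IsBounded (range g)) (hxy : x ≠ y) :
    sInf (g '' {z | adj x z}) - sInf (g '' {z | adj y z}) ≤ max (g y - g x) 0 := by
  have hIx : sInf (g '' {z | adj x z}) ≤ g y :=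
    sInf_image_le_of_mem hg.bddBelow (hcomplete x y hxy)
  have hIy : min (g x) (sInf (g '' {z | adj x z})) ≤ sInf (g '' {z | adj y z}) := by
    refine le_sInf_image ⟨x, hcomplete y x hxy.symm⟩ fun b _ => ?_
    rcases eq_or_ne b x with rfl | hbx
    · exact min_le_left _ _
    · exact min_le_of_right_le (sInf_image_le_of_mem hg.bddBelow (hcomplete x b hbx.symm))
  rcases min_le_iff.1 hIy with h | h
  · exact le_max_of_le_left (by linarith)
  · exact le_max_of_le_right (by linarith)

end CompleteGraph

lemma gameVal_zero_sub_le_of_complete {δ : ℝ} {f : V → ℝ}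
    (hcomplete : ∀ a b : V, a ≠ b → adj a b) (hN : ∀ x : V, {y | adj x y}.Nonempty)
    (hf : IsBounded (range f)) (hδ : ∀ x y, f x - f y ≤ δ) (n : ℕ) (x y : V) :
    gameVal adj f 0 n x - gameVal adj f 0 n y ≤ δ := by
  have hδ₀ : 0 ≤ δ := by simpa using hδ x x
  suffices ∀ n x y, x ≠ y → gameVal adj f 0 n x - gameVal adj f 0 n y ≤ δ ∧
      gameVal adj f 0 n x - gameVal adj f 0 n y ≤ δ + (f x - f y) by
    rcases eq_or_ne x y with rfl | hxy
    · simpa using hδ₀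
    · exact (this n x y hxy).1
  intro n
  induction n with
  | zero =>
    intro x y _
    simp only [gameVal, Pi.zero_apply, sub_self]
    exact ⟨hδ₀, by linarith [hδ y x]⟩
  | succ n ih =>
    intro x y hxy
    have hv := isBounded_range_gameVal hN hf isBounded_range_zero n
    have hS := sSup_image_sub_le_of_complete hcomplete hv hxy
    have hI := sInf_image_sub_le_of_complete hcomplete hv hxy
    have hM₁ := max_le (ih y x hxy.symm).1 hδ₀
    have hM₂ := max_le (ih y x hxy.symm).2 (show 0 ≤ δ + (f y - f x) by linarith [hδ x y])
    rw [gameVal_succ, gameVal_succ]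
    constructor <;> linarith

lemma gameVal_zero_sub_le_sq_mul {D : ℕ} {δ : ℝ} {f : V → ℝ} (hs : Symmetric adj)
    (hconn : ∀ x y : V, ∃ n, ReachesIn adj n x y) (hdist : ∀ x y, graphDist adj x y ≤ D)
    (hN : ∀ x : V, {y | adj x y}.Nonempty) (hf : IsBounded (range f))
    (hδ : ∀ x y, f x - f y ≤ δ) (n : ℕ) (x y : V) :
    gameVal adj f 0 n x - gameVal adj f 0 n y ≤ (D : ℝ) ^ 2 * δ := by
  have hδ₀ : 0 ≤ δ := by simpa using hδ x x
  rcases eq_or_ne x y with rfl | hxy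
  · simpa using mul_nonneg (sq_nonneg (D : ℝ)) hδ₀
  rcases le_or_gt 2 D with hD | hD
  · calc _ ≤ distPotential D (graphDist adj x y) * δ :=
          gameVal_zero_sub_le_distPotential_mul hs hconn hdist hD hN hf hδ n x y
      _ ≤ (D : ℝ) ^ 2 * δ := mul_le_mul_of_nonneg_right distPotential_le_sq hδ₀
  · have hcomplete : ∀ a b : V, a ≠ b → adj a b := fun a b hab => by
      have := mt (eq_of_graphDist_eq_zero hconn) hab
      exact adj_of_graphDist_eq_one hconn (by have := hdist a b; omega)
    have hD₁ : D = 1 := by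
      have := mt (eq_of_graphDist_eq_zero hconn) hxy
      have := hdist x y
      omega
    simpa [hD₁] using gameVal_zero_sub_le_of_complete hcomplete hN hf hδ n x y

end

/-- On a connected graph of finite diameter, the oscillation of the
game values is bounded:
`sup u_n − inf u_n ≤ (sup u₀ − inf u₀) + diam(G)²·(sup f − inf f)` for all `n`. -/
theorem game_values_oscillation_bound {V : Type*} (adj : V → V → Prop)
    (hsymm : Symmetric adj)
    (hdiam : ∃ D : ℕ, ∀ x y : V, ∃ n ≤ D, ReachesIn adj n x y)
    (f u₀ : V → ℝ) (hf : ∃ M : ℝ, ∀ x, |f x| ≤ M) (hu₀ : ∃ M : ℝ, ∀ x, |u₀ x| ≤ M) :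
    ∀ n : ℕ,
      (⨆ x : V, gameVal adj f u₀ n x) - (⨅ x : V, gameVal adj f u₀ n x) ≤
        ((⨆ x : V, u₀ x) - (⨅ x : V, u₀ x)) +
          (graphDiam adj : ℝ) ^ 2 * ((⨆ x : V, f x) - (⨅ x : V, f x)) := by
  intro n
  rcases isEmpty_or_nonempty V with hV | hV
  · simp
  have hbdd : ∀ g : V → ℝ, (∃ M : ℝ, ∀ x, |g x| ≤ M) → IsBounded (range g) :=
    fun g ⟨M, hM⟩ => isBounded_iff_forall_norm_le.2 ⟨M, forall_mem_range.2 hM⟩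
  have hfb := hbdd f hf
  have hub := hbdd u₀ hu₀
  refine ciSup_sub_ciInf_le fun x y => ?_
  rcases subsingleton_or_nontrivial V with hV₁ | hV₁
  · rw [Subsingleton.elim x y, sub_self]
    exact add_nonneg (by simpa using sub_le_ciSup_sub_ciInf hub y y)
      (mul_nonneg (sq_nonneg _) (by simpa using sub_le_ciSup_sub_ciInf hfb y y))
  obtain ⟨D, hD⟩ := hdiam
  have hconn : ∀ x y : V, ∃ n, ReachesIn adj n x y := fun x y => (hD x y).imp fun _ h => h.2
  have hN : ∀ x : V, {y | adj x y}.Nonempty := fun x =>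
    (exists_ne x).elim fun _ hy => exists_adj_of_ne hconn hy.symm
  have hupper := gameVal_le_gameVal_add (c := ⨆ x, u₀ x) hN hfb hub isBounded_range_zero
    (fun z => by simpa using le_ciSup hub.bddAbove z) n x
  have hlower := gameVal_le_gameVal_add (c := -⨅ x, u₀ x) hN hfb isBounded_range_zero hub
    (fun z => by simpa using ciInf_le hub.bddBelow z) n y
  have hcore := gameVal_zero_sub_le_sq_mul hsymm hconn (graphDist_le_graphDiam hD) hN hfb
    (sub_le_ciSup_sub_ciInf hfb) n x y
  linarith
end

section
/- Let G=(V,E) be either the ε-adjacency graph of a compact length space, or a finite connected graph with a loop at each vertex; let f, u₀ be functions on V (continuous if G is an adjacency graph), and assume c_f = 0. Then the game values (u_n) with terminal payoff u₀ and running payoff f satisfy lim_{n→∞} sup_{x∈V} |u_{n+1}(x) − u_n(x)| = 0. -/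
open Set Filter Topology
open scoped ENNReal Classical

/-- A compact length space: the (extended) distance between two points is the infimum of
the lengths (total variations) of continuous paths joining them. -/
def IsLengthSpace (V : Type*) [MetricSpace V] : Prop :=
  ∀ x y : V, edist x y = ⨅ γ : Path x y, eVariationOn (fun t => γ t) (Set.univ : Set unitInterval)

/-!
The largest one-round increment `δ n = sup_x (u (n+1) x - u n x)` is nonincreasing, because one
round of the game is monotone and commutes with adding constants; let `L` be its limit. At a
point where the increment at round `m + 1` is almost `L`, neither the sup nor the inf over the
neighbourhood can have grown by more than `δ m ≈ L`, so both grew by almost `L`; the neighbour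
minimising `u m` then has increment almost `L` at round `m` and a value lower by almost `L`.
Going back `k` rounds lowers the value by about `k L`, so `L > 0` would contradict the uniform
bound on `u n` that `c_f = 0` gives. Hence `L ≤ 0`, and the same argument applied to
`(-f, -u₀)` bounds the increments from below.
-/

theorem csSup_image_le_csSup_image_add {α : Type*} {s : Set α} {g h : α → ℝ} {K : ℝ}
    (hs : s.Nonempty) (hh : BddAbove (h '' s)) (hgh : ∀ y ∈ s, g y ≤ h y + K) :
    sSup (g '' s) ≤ sSup (h '' s) + K :=
  csSup_le (hs.image g) <| forall_mem_image.2 fun y hy =>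
    (hgh y hy).trans (add_le_add_left (le_csSup hh (mem_image_of_mem h hy)) K)

theorem csInf_image_le_csInf_image_add {α : Type*} {s : Set α} {g h : α → ℝ} {K : ℝ}
    (hs : s.Nonempty) (hg : BddBelow (g '' s)) (hgh : ∀ y ∈ s, g y ≤ h y + K) :
    sInf (g '' s) ≤ sInf (h '' s) + K :=
  sub_le_iff_le_add.1 <| le_csInf (hs.image h) <| forall_mem_image.2 fun y hy =>
    sub_le_iff_le_add.2 ((csInf_le hg (mem_image_of_mem g hy)).trans (hgh y hy))

theorem bddBelow_range_of_abs_le {ι : Type*} {u : ι → ℝ} {B : ℝ} (h : ∀ i, |u i| ≤ B) :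
    BddBelow (range u) :=
  ⟨-B, forall_mem_range.2 fun i => neg_le_of_abs_le (h i)⟩

theorem bddAbove_range_of_abs_le {ι : Type*} {u : ι → ℝ} {B : ℝ} (h : ∀ i, |u i| ≤ B) :
    BddAbove (range u) :=
  ⟨B, forall_mem_range.2 fun i => le_of_abs_le (h i)⟩

namespace GameValues

variable {V : Type*} {adj : V → V → Prop}

noncomputable def gameStep (adj : V → V → Prop) (f u : V → ℝ) (x : V) : ℝ :=
  (sSup (u '' {y | adj x y}) + sInf (u '' {y | adj x y})) / 2 + f x

theorem gameVal_succ (adj : V → V → Prop) (f u₀ : V → ℝ) (n : ℕ) :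
    gameVal adj f u₀ (n + 1) = gameStep adj f (gameVal adj f u₀ n) := rfl

theorem gameStep_le_gameStep_add (hrefl : ∀ x, adj x x) (f : V → ℝ) {u v : V → ℝ} {K : ℝ}
    (hu : BddBelow (range u)) (hv : BddAbove (range v)) (huv : ∀ y, u y ≤ v y + K) (x : V) :
    gameStep adj f u x ≤ gameStep adj f v x + K := by
  have hx : {y | adj x y}.Nonempty := ⟨x, hrefl x⟩
  have hsup := csSup_image_le_csSup_image_add hx (hv.mono (image_subset_range v _))
    fun y _ => huv y
  have hinf := csInf_image_le_csInf_image_add hx (hu.mono (image_subset_range u _))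
    fun y _ => huv y
  unfold gameStep
  linarith

theorem gameStep_const (hrefl : ∀ x, adj x x) (f : V → ℝ) (c : ℝ) (x : V) :
    gameStep adj f (fun _ => c) x = c + f x := by
  have hx : {y | adj x y}.Nonempty := ⟨x, hrefl x⟩
  simp only [gameStep, hx.image_const, csSup_singleton, csInf_singleton, add_self_div_two]

theorem gameStep_neg (adj : V → V → Prop) (f u : V → ℝ) :
    gameStep adj (-f) (-u) = -gameStep adj f u := by
  ext x
  have himage : (-u) '' {y | adj x y} = -(u '' {y | adj x y}) := by
    rw [← image_neg_eq_neg, image_image]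
    rfl
  rw [Pi.neg_apply, gameStep, gameStep, himage, Real.sSup_neg, Real.sInf_neg, Pi.neg_apply]
  ring

theorem gameVal_neg (adj : V → V → Prop) (f u₀ : V → ℝ) (n : ℕ) :
    gameVal adj (-f) (-u₀) n = -gameVal adj f u₀ n := by
  induction n with
  | zero => rfl
  | succ n ih => rw [gameVal_succ, gameVal_succ, ih, gameStep_neg]

theorem abs_gameStep_le (hrefl : ∀ x, adj x x) {f u : V → ℝ} {F B : ℝ} (hf : ∀ x, |f x| ≤ F)
    (hu : ∀ y, |u y| ≤ B) (x : V) : |gameStep adj f u x| ≤ B + F := by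
  have hupper := gameStep_le_gameStep_add hrefl f (v := fun _ => B) (K := 0)
    (bddBelow_range_of_abs_le hu) ⟨B, forall_mem_range.2 fun _ => le_rfl⟩
    (fun y => by simpa using le_of_abs_le (hu y)) x
  have hlower := gameStep_le_gameStep_add hrefl f (u := fun _ => -B) (K := 0)
    ⟨-B, forall_mem_range.2 fun _ => le_rfl⟩ (bddAbove_range_of_abs_le hu)
    (fun y => by simpa using neg_le_of_abs_le (hu y)) x
  rw [gameStep_const hrefl] at hupper hlower
  have hfx := abs_le.1 (hf x)
  rw [abs_le]
  constructor <;> linarith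

theorem abs_gameVal_le (hrefl : ∀ x, adj x x) {f u₀ : V → ℝ} {F B : ℝ} (hf : ∀ x, |f x| ≤ F)
    (hu₀ : ∀ x, |u₀ x| ≤ B) (n : ℕ) (x : V) : |gameVal adj f u₀ n x| ≤ B + n * F := by
  induction n generalizing x with
  | zero => simpa [gameVal] using hu₀ x
  | succ n ih =>
    rw [gameVal_succ, Nat.cast_succ, add_one_mul, ← add_assoc]
    exact abs_gameStep_le hrefl hf ih x

theorem abs_gameVal_sub_gameVal_le (hrefl : ∀ x, adj x x) {f u₀ v₀ : V → ℝ} {F B B' K : ℝ}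
    (hf : ∀ x, |f x| ≤ F) (hu₀ : ∀ x, |u₀ x| ≤ B) (hv₀ : ∀ x, |v₀ x| ≤ B')
    (huv : ∀ x, |u₀ x - v₀ x| ≤ K) (n : ℕ) (x : V) :
    |gameVal adj f u₀ n x - gameVal adj f v₀ n x| ≤ K := by
  induction n generalizing x with
  | zero => exact huv x
  | succ n ih =>
    have hu := abs_gameVal_le hrefl hf hu₀ n
    have hv := abs_gameVal_le hrefl hf hv₀ n
    rw [gameVal_succ, gameVal_succ]
    refine abs_sub_le_iff.2 ⟨sub_le_iff_le_add'.2 ?_, sub_le_iff_le_add'.2 ?_⟩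
    exacts [gameStep_le_gameStep_add hrefl f (bddBelow_range_of_abs_le hu)
        (bddAbove_range_of_abs_le hv) (fun y => by linarith [(abs_le.1 (ih y)).2]) x,
      gameStep_le_gameStep_add hrefl f (bddBelow_range_of_abs_le hv)
        (bddAbove_range_of_abs_le hu) (fun y => by linarith [(abs_le.1 (ih y)).1]) x]

theorem exists_abs_gameVal_le_of_isLTA_zero (hrefl : ∀ x, adj x x) {f u₀ : V → ℝ} {F B : ℝ}
    (hf : ∀ x, |f x| ≤ F) (hu₀ : ∀ x, |u₀ x| ≤ B) (hlta : IsLTA adj f 0) :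
    ∃ C, ∀ n x, |gameVal adj f u₀ n x| ≤ C := by
  obtain ⟨C₀, hC₀⟩ := hlta
  refine ⟨C₀ + B, fun n x => ?_⟩
  have hzero : |gameVal adj f (fun _ => 0) n x| ≤ C₀ := by simpa using hC₀ n x
  have hclose := abs_gameVal_sub_gameVal_le hrefl hf hu₀ (v₀ := fun _ => 0) (B' := 0)
    (fun _ => by simp) (fun x => by simpa using hu₀ x) n x
  linarith [abs_sub_abs_le_abs_sub (gameVal adj f u₀ n x) (gameVal adj f (fun _ => 0) n x)]

noncomputable def maxIncrement (adj : V → V → Prop) (f u₀ : V → ℝ) (n : ℕ) : ℝ :=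
  ⨆ x, (gameVal adj f u₀ (n + 1) x - gameVal adj f u₀ n x)

section UniformlyBounded

variable {f u₀ : V → ℝ} {C : ℝ}

theorem gameVal_succ_sub_le_maxIncrement (hC : ∀ n x, |gameVal adj f u₀ n x| ≤ C) (n : ℕ)
    (x : V) : gameVal adj f u₀ (n + 1) x - gameVal adj f u₀ n x ≤ maxIncrement adj f u₀ n :=
  le_ciSup (f := fun y => gameVal adj f u₀ (n + 1) y - gameVal adj f u₀ n y)
    ⟨2 * C, forall_mem_range.2 fun y => by
    linarith [le_of_abs_le (hC (n + 1) y), neg_le_of_abs_le (hC n y)]⟩ x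

theorem bddBelow_range_maxIncrement [Nonempty V] (hC : ∀ n x, |gameVal adj f u₀ n x| ≤ C) :
    BddBelow (range (maxIncrement adj f u₀)) := by
  refine ⟨-(2 * C), forall_mem_range.2 fun n => ?_⟩
  obtain ⟨x⟩ := ‹Nonempty V›
  linarith [le_of_abs_le (hC n x), neg_le_of_abs_le (hC (n + 1) x),
    gameVal_succ_sub_le_maxIncrement hC n x]

theorem maxIncrement_antitone [Nonempty V] (hrefl : ∀ x, adj x x)
    (hC : ∀ n x, |gameVal adj f u₀ n x| ≤ C) : Antitone (maxIncrement adj f u₀) :=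
  antitone_nat_of_succ_le fun n => ciSup_le fun x => sub_le_iff_le_add'.2 <|
    gameStep_le_gameStep_add hrefl f (bddBelow_range_of_abs_le (hC (n + 1)))
      (bddAbove_range_of_abs_le (hC n))
      (fun y => sub_le_iff_le_add'.1 (gameVal_succ_sub_le_maxIncrement hC n y)) x

theorem exists_prev_increment_ge (hrefl : ∀ x, adj x x) (hC : ∀ n x, |gameVal adj f u₀ n x| ≤ C)
    (m : ℕ) (x : V) {η : ℝ} (hη : 0 < η) :
    ∃ y, 2 * (gameVal adj f u₀ (m + 2) x - gameVal adj f u₀ (m + 1) x) -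
          maxIncrement adj f u₀ m - η ≤ gameVal adj f u₀ (m + 1) y - gameVal adj f u₀ m y ∧
        gameVal adj f u₀ m y + (2 * (gameVal adj f u₀ (m + 2) x - gameVal adj f u₀ (m + 1) x) -
          maxIncrement adj f u₀ m) ≤ gameVal adj f u₀ (m + 1) x + η := by
  set u := gameVal adj f u₀
  set s := {y | adj x y}
  have hs : s.Nonempty := ⟨x, hrefl x⟩
  have hsup : sSup (u (m + 1) '' s) ≤ sSup (u m '' s) + maxIncrement adj f u₀ m :=
    csSup_image_le_csSup_image_add hs ((bddAbove_range_of_abs_le (hC m)).mono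
      (image_subset_range _ _)) fun y _ =>
        sub_le_iff_le_add'.1 (gameVal_succ_sub_le_maxIncrement hC m y)
  have hbdd : BddBelow (u (m + 1) '' s) :=
    (bddBelow_range_of_abs_le (hC (m + 1))).mono (image_subset_range _ _)
  obtain ⟨_, ⟨y, hy, rfl⟩, hy_lt⟩ :=
    exists_lt_of_csInf_lt (hs.image (u m)) (lt_add_of_pos_right (sInf (u m '' s)) hη)
  have hinf_y : sInf (u (m + 1) '' s) ≤ u (m + 1) y := csInf_le hbdd (mem_image_of_mem _ hy)
  have hinf_x : sInf (u (m + 1) '' s) ≤ u (m + 1) x :=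
    csInf_le hbdd (mem_image_of_mem _ (hrefl x))
  have hstep₁ : u (m + 1) x = (sSup (u m '' s) + sInf (u m '' s)) / 2 + f x := rfl
  have hstep₂ : u (m + 2) x = (sSup (u (m + 1) '' s) + sInf (u (m + 1) '' s)) / 2 + f x := rfl
  exact ⟨y, by linarith, by linarith⟩

theorem eventually_exists_large_increment_and_gameVal_le [Nonempty V] (hrefl : ∀ x, adj x x)
    (hC : ∀ n x, |gameVal adj f u₀ n x| ≤ C) (j : ℕ) {ε : ℝ} (hε : 0 < ε) :
    ∀ᶠ m in atTop, ∃ z, (⨅ n, maxIncrement adj f u₀ n) - ε ≤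
        gameVal adj f u₀ (m + 1) z - gameVal adj f u₀ m z ∧
      gameVal adj f u₀ m z + j * (⨅ n, maxIncrement adj f u₀ n) ≤ C + ε := by
  set L := ⨅ n, maxIncrement adj f u₀ n
  have hbdd := bddBelow_range_maxIncrement hC
  induction j generalizing ε with
  | zero =>
    refine Eventually.of_forall fun m => ?_
    obtain ⟨z, hz⟩ := exists_lt_of_lt_ciSup (sub_lt_self (maxIncrement adj f u₀ m) hε)
    refine ⟨z, by linarith [ciInf_le hbdd m], ?_⟩
    rw [Nat.cast_zero, zero_mul, add_zero]
    linarith [le_of_abs_le (hC m z)]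
  | succ j ih =>
    have hε' : 0 < ε / 5 := by positivity
    have hnear : ∀ᶠ m in atTop, maxIncrement adj f u₀ m < L + ε / 5 :=
      (tendsto_atTop_ciInf (maxIncrement_antitone hrefl hC) hbdd).eventually
        (gt_mem_nhds (lt_add_of_pos_right L hε'))
    filter_upwards [hnear, (tendsto_add_atTop_nat 1).eventually (ih hε')] with m hm ⟨x, hx, hxC⟩
    obtain ⟨y, hy, hyC⟩ := exists_prev_increment_ge hrefl hC m x hε'
    refine ⟨y, by linarith, ?_⟩
    push_cast
    linarith

theorem iInf_maxIncrement_nonpos [Nonempty V] (hrefl : ∀ x, adj x x)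
    (hC : ∀ n x, |gameVal adj f u₀ n x| ≤ C) : ⨅ n, maxIncrement adj f u₀ n ≤ 0 := by
  by_contra! hL
  obtain ⟨k, hk⟩ := exists_nat_gt ((2 * C + 1) / ⨅ n, maxIncrement adj f u₀ n)
  obtain ⟨m, z, -, hz⟩ :=
    (eventually_exists_large_increment_and_gameVal_le hrefl hC k one_pos).exists
  rw [div_lt_iff₀ hL] at hk
  linarith [neg_le_of_abs_le (hC m z)]

theorem eventually_gameVal_succ_sub_le (hrefl : ∀ x, adj x x)
    (hC : ∀ n x, |gameVal adj f u₀ n x| ≤ C) {ε : ℝ} (hε : 0 < ε) :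
    ∀ᶠ n in atTop, ∀ x, gameVal adj f u₀ (n + 1) x - gameVal adj f u₀ n x ≤ ε := by
  rcases isEmpty_or_nonempty V with _ | _
  · exact Eventually.of_forall fun _ x => isEmptyElim x
  have hlim :=
    tendsto_atTop_ciInf (maxIncrement_antitone hrefl hC) (bddBelow_range_maxIncrement hC)
  filter_upwards [hlim.eventually (gt_mem_nhds ((iInf_maxIncrement_nonpos hrefl hC).trans_lt hε))]
    with n hn x
  exact (gameVal_succ_sub_le_maxIncrement hC n x).trans hn.le

end UniformlyBounded

theorem tendsto_iSup_abs_gameVal_succ_sub (hrefl : ∀ x, adj x x) {f u₀ : V → ℝ} {F B : ℝ}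
    (hf : ∀ x, |f x| ≤ F) (hu₀ : ∀ x, |u₀ x| ≤ B) (hlta : IsLTA adj f 0) :
    Tendsto (fun n => ⨆ x, |gameVal adj f u₀ (n + 1) x - gameVal adj f u₀ n x|) atTop (𝓝 0) := by
  obtain ⟨C, hC⟩ := exists_abs_gameVal_le_of_isLTA_zero hrefl hf hu₀ hlta
  have hC_neg : ∀ n x, |gameVal adj (-f) (-u₀) n x| ≤ C := fun n x => by
    rw [gameVal_neg, Pi.neg_apply, abs_neg]
    exact hC n x
  refine tendsto_order.2 ⟨fun a ha => Eventually.of_forall fun n =>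
    ha.trans_le (Real.iSup_nonneg fun x => abs_nonneg _), fun ε hε => ?_⟩
  have hε2 : 0 < ε / 2 := by positivity
  filter_upwards [eventually_gameVal_succ_sub_le hrefl hC hε2,
    eventually_gameVal_succ_sub_le hrefl hC_neg hε2] with n hup hdown
  refine (Real.iSup_le (fun x => abs_sub_le_iff.2 ⟨hup x, ?_⟩) hε2.le).trans_lt (half_lt_self hε)
  have hdown_x := hdown x
  rwa [gameVal_neg, gameVal_neg, Pi.neg_apply, Pi.neg_apply, neg_sub_neg] at hdown_x

end GameValues

/-- On the `ε`-adjacency graph of a compact length space (with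
continuous payoffs), or on a finite connected graph with a loop at each vertex, if
`c_f = 0` then `sup_x |u_{n+1}(x) − u_n(x)| → 0`. -/
theorem game_values_successive_differences_vanish :
    (∀ (V : Type) [MetricSpace V] [CompactSpace V] [Nonempty V], IsLengthSpace V →
      ∀ ε : ℝ, 0 < ε → ∀ f u₀ : V → ℝ, Continuous f → Continuous u₀ →
        IsLTA (fun x y => dist x y ≤ ε) f 0 →
        Tendsto (fun n => ⨆ x : V, |gameVal (fun a b => dist a b ≤ ε) f u₀ (n + 1) x -
            gameVal (fun a b => dist a b ≤ ε) f u₀ n x|) atTop (𝓝 0)) ∧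
    (∀ (V : Type) [Fintype V] (adj : V → V → Prop), Symmetric adj → (∀ x, adj x x) →
      (∀ x y : V, ∃ n : ℕ, ReachesIn adj n x y) → ∀ f u₀ : V → ℝ,
        IsLTA adj f 0 →
        Tendsto (fun n => ⨆ x : V, |gameVal adj f u₀ (n + 1) x - gameVal adj f u₀ n x|)
          atTop (𝓝 0)) := by
  constructor
  · intro V _ _ _ _ ε hε f u₀ hf hu₀ hlta
    obtain ⟨F, hF⟩ := isCompact_univ.exists_bound_of_continuousOn hf.continuousOn
    obtain ⟨B, hB⟩ := isCompact_univ.exists_bound_of_continuousOn hu₀.continuousOn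
    exact GameValues.tendsto_iSup_abs_gameVal_succ_sub
      (fun x : V => (dist_self x).trans_le hε.le) (fun x => hF x (mem_univ x))
      (fun x => hB x (mem_univ x)) hlta
  · intro V _ adj _ hrefl _ f u₀ hlta
    obtain ⟨F, hF⟩ := Finite.exists_le fun x => |f x|
    obtain ⟨B, hB⟩ := Finite.exists_le fun x => |u₀ x|
    exact GameValues.tendsto_iSup_abs_gameVal_succ_sub hrefl hF hB hlta
end
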